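/- For every even integer k ≥ 2, there exists a constant c > 0 (depending only on k) such that for every sufficiently large n there exist a set P of n points in ℝ³ and positive distances δ₁, …, δ_k for which P spans at least c · n^{k/2 + 1} k-chains. That is, C⁽³⁾_k(n) = Ω(n^{k/2+1}). -/

import Mathlib

/-!
Put `n - m` points on the unit circle in the plane `z = 0` and `m = k / 2` points on the
`z`-axis, at heights `0, …, m - 1`. Every circle point is at distance `√(1 + h²)` from the
axis point at height `h`, so with `δ (2i) = δ (2i+1) = √(1 + i²)` every tuple
`(c₀, a₀, c₁, a₁, …, a_{m-1}, c_m)` of distinct circle points `cᵢ` interleaved with the axis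
points `aᵢ` is a `k`-chain. This gives `(n - m)(n - m - 1)⋯(n - 2m) ≥ (n / 2)^(m+1)` chains.
-/

/-- The number of `k`-chains spanned by a finite point set `P` in `ℝ^d` with respect to a
sequence of distances `δ : Fin k → ℝ`: tuples `(p 0, …, p k)` of pairwise distinct points of
`P` with `dist (p j) (p (j+1)) = δ j` for all `j`. -/
noncomputable def chainCount (d k : ℕ) (P : Finset (EuclideanSpace ℝ (Fin d)))
    (δ : Fin k → ℝ) : ℕ :=
  Set.ncard {p : Fin (k + 1) → EuclideanSpace ℝ (Fin d) |
    (∀ i, p i ∈ P) ∧ Function.Injective p ∧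
    ∀ j : Fin k, dist (p j.castSucc) (p j.succ) = δ j}

/-- `maxChains d k n` is the maximum number of `k`-chains spanned by a set of `n` points in
`ℝ^d`, over all sequences of positive distances. -/
noncomputable def maxChains (d k n : ℕ) : ℕ :=
  sSup {m | ∃ (P : Finset (EuclideanSpace ℝ (Fin d))) (δ : Fin k → ℝ),
    P.card = n ∧ (∀ j, 0 < δ j) ∧ m = chainCount d k P δ}

open Function

lemma card_le_chainCount {d k : ℕ} {P : Finset (EuclideanSpace ℝ (Fin d))} {δ : Fin k → ℝ}
    {ι : Type*} (F : ι → Fin (k + 1) → EuclideanSpace ℝ (Fin d)) (hF : Injective F)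
    (hchain : ∀ i, (∀ j, F i j ∈ P) ∧ Injective (F i) ∧
      ∀ j : Fin k, dist (F i j.castSucc) (F i j.succ) = δ j) :
    Nat.card ι ≤ chainCount d k P δ := by
  have hfin : Set.Finite {p : Fin (k + 1) → EuclideanSpace ℝ (Fin d) |
      (∀ i, p i ∈ P) ∧ Injective p ∧ ∀ j : Fin k, dist (p j.castSucc) (p j.succ) = δ j} :=
    (Set.Finite.pi' fun _ => P.finite_toSet).subset fun p hp => hp.1
  have := hfin.to_subtype
  rw [chainCount, ← Nat.card_coe_set_eq]
  exact Nat.card_le_card_of_injective (fun i => ⟨F i, hchain i⟩) fun i i' h => hF congr($h.1)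

lemma dist_unitCircle_zAxis {x y : ℝ} (hxy : x ^ 2 + y ^ 2 = 1) (h : ℝ) :
    dist !₂[x, y, 0] !₂[0, 0, h] = √(1 + h ^ 2) := by
  rw [EuclideanSpace.dist_eq, Fin.sum_univ_three]
  simp [← hxy]

-- `(t + 1)⁻¹ ∈ (0, 1]`: distinct points of the unit circle, none of them on the `z`-axis.
noncomputable def circleAxisPt (N m : ℕ) : Fin N ⊕ Fin m → EuclideanSpace ℝ (Fin 3) :=
  Sum.elim (fun t => !₂[((t : ℝ) + 1)⁻¹, √(1 - ((t : ℝ) + 1)⁻¹ ^ 2), 0])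
    (fun i => !₂[0, 0, (i : ℝ)])

lemma circleAxisPt_injective (N m : ℕ) : Injective (circleAxisPt N m) := by
  rintro (t | i) (t' | i') h <;>
    have h0 := congr($h 0) <;> have h2 := congr($h 2) <;>
    simp [circleAxisPt] at h0 h2
  · exact congrArg Sum.inl (Fin.ext (by exact_mod_cast h0))
  · exact absurd h0 (by positivity)
  · exact absurd h0.symm (by positivity)
  · exact congrArg Sum.inr (Fin.ext (by exact_mod_cast h2))

lemma dist_circleAxisPt_inl_inr {N m : ℕ} (t : Fin N) (i : Fin m) :
    dist (circleAxisPt N m (.inl t)) (circleAxisPt N m (.inr i)) = √(1 + (i : ℝ) ^ 2) := by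
  have hx : ((t : ℝ) + 1)⁻¹ ^ 2 ≤ 1 := pow_le_one₀ (by positivity) (inv_le_one_of_one_le₀ (by simp))
  exact dist_unitCircle_zAxis (by rw [Real.sq_sqrt (by linarith)]; ring) _

section Zigzag

variable {α : Type*} {m : ℕ}

def zigzag (g : Fin (m + 1) → α) (j : Fin (m + m + 1)) : α ⊕ Fin m :=
  if h : (j : ℕ) % 2 = 0 then .inl (g ⟨j / 2, by omega⟩) else .inr ⟨j / 2, by omega⟩

lemma zigzag_two_mul (g : Fin (m + 1) → α) (i : Fin (m + 1)) :
    zigzag g ⟨2 * i, by omega⟩ = .inl (g i) := by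
  simp [zigzag]

lemma zigzag_injective {g : Fin (m + 1) → α} (hg : Injective g) : Injective (zigzag g) := by
  intro a b h
  unfold zigzag at h
  split_ifs at h <;> grind [Injective]

lemma zigzag_castSucc_succ (g : Fin (m + 1) → α) (j : Fin (m + m)) :
    ∃ a, (zigzag g j.castSucc = .inl a ∧ zigzag g j.succ = .inr ⟨j / 2, by omega⟩) ∨
      (zigzag g j.castSucc = .inr ⟨j / 2, by omega⟩ ∧ zigzag g j.succ = .inl a) := by
  by_cases hj : (j : ℕ) % 2 = 0
  · exact ⟨g ⟨j / 2, by omega⟩, .inl (by grind [zigzag])⟩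
  · exact ⟨g ⟨j / 2 + 1, by omega⟩, .inr (by grind [zigzag])⟩

end Zigzag

noncomputable def circleAxisSet (N m : ℕ) : Finset (EuclideanSpace ℝ (Fin 3)) :=
  Finset.univ.map ⟨circleAxisPt N m, circleAxisPt_injective N m⟩

lemma card_circleAxisSet (N m : ℕ) : (circleAxisSet N m).card = N + m := by
  simp [circleAxisSet]

lemma descFactorial_le_chainCount_circleAxisSet (N m : ℕ) :
    N.descFactorial (m + 1) ≤
      chainCount 3 (m + m) (circleAxisSet N m) (fun j => √(1 + ((j / 2 : ℕ) : ℝ) ^ 2)) := by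
  calc N.descFactorial (m + 1) = Nat.card (Fin (m + 1) ↪ Fin N) := by
        simp [Nat.card_eq_fintype_card, Fintype.card_embedding_eq]
    _ ≤ _ := card_le_chainCount (fun g => circleAxisPt N m ∘ zigzag g) ?inj ?chain
  case inj =>
    intro g g' h
    have hz : zigzag g = zigzag g' := funext fun j => circleAxisPt_injective N m congr($h j)
    refine Embedding.ext fun i => ?_
    simpa [zigzag_two_mul] using congr($hz ⟨2 * i, by omega⟩)
  case chain =>
    intro g
    refine ⟨fun j => by simp [circleAxisSet],
      (circleAxisPt_injective N m).comp (zigzag_injective g.injective), fun j => ?_⟩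
    obtain ⟨a, ⟨h1, h2⟩ | ⟨h1, h2⟩⟩ := zigzag_castSucc_succ g j
    · simp [h1, h2, dist_circleAxisPt_inl_inr]
    · simp [h1, h2, dist_comm, dist_circleAxisPt_inl_inr]

lemma half_pow_mul_le_descFactorial {m n : ℕ} (hn : 4 * m ≤ n) :
    (1 / 2 : ℝ) ^ (m + 1) * n ^ (m + 1) ≤ (n - m).descFactorial (m + 1) := by
  calc (1 / 2 : ℝ) ^ (m + 1) * n ^ (m + 1) = (n / 2 : ℝ) ^ (m + 1) := by ring
    _ ≤ ((n - m + 1 - (m + 1) : ℕ) : ℝ) ^ (m + 1) := by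
      gcongr
      rw [show n - m + 1 - (m + 1) = n - 2 * m by omega, Nat.cast_sub (by omega)]
      have : (4 * m : ℝ) ≤ n := by exact_mod_cast hn
      push_cast; linarith
    _ ≤ (n - m).descFactorial (m + 1) := by exact_mod_cast Nat.pow_sub_le_descFactorial _ _

theorem chains_lower_R3_even_general (k : ℕ) (heven : Even k) :
    ∃ c : ℝ, 0 < c ∧ ∃ N : ℕ, ∀ n : ℕ, N ≤ n →
      ∃ (P : Finset (EuclideanSpace ℝ (Fin 3))) (δ : Fin k → ℝ),
        P.card = n ∧ (∀ j, 0 < δ j) ∧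
        c * (n : ℝ) ^ (k / 2 + 1) ≤ (chainCount 3 k P δ : ℝ) := by
  obtain ⟨m, rfl⟩ := heven
  refine ⟨(1 / 2) ^ (m + 1), by positivity, 4 * m, fun n hn => ⟨circleAxisSet (n - m) m,
    fun j => √(1 + ((j / 2 : ℕ) : ℝ) ^ 2), ?_, fun j => by positivity, ?_⟩⟩
  · rw [card_circleAxisSet]
    omega
  · rw [show (m + m) / 2 = m by omega]
    exact (half_pow_mul_le_descFactorial hn).trans
      (by exact_mod_cast descFactorial_le_chainCount_circleAxisSet _ _)

theorem chains_lower_R3_even (k : ℕ) (hk : 2 ≤ k) (heven : Even k) :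
    ∃ c : ℝ, 0 < c ∧ ∃ N : ℕ, ∀ n : ℕ, N ≤ n →
      ∃ (P : Finset (EuclideanSpace ℝ (Fin 3))) (δ : Fin k → ℝ),
        P.card = n ∧ (∀ j, 0 < δ j) ∧
        c * (n : ℝ) ^ (k / 2 + 1) ≤ (chainCount 3 k P δ : ℝ) :=
  chains_lower_R3_even_general k heven
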